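/- In the degenerate affine Hecke algebra H_n over a commutative ring k, the center contains all symmetric polynomials in x_1, …, x_n; that is, for every symmetric polynomial p ∈ k[x_1,…,x_n]^{S_n}, the element p(x_1,…,x_n) commutes with every s_j (1 ≤ j ≤ n-1) and hence with all of H_n. -/
import Mathlib

open MvPolynomial

lemma aux_X_reg {k : Type*} [CommRing k] {σ : Type*} (b : σ)
    {q : MvPolynomial σ k} (h : X b * q = 0) : q = 0 := by
  ext m
  have := congrArg (coeff (Finsupp.single b 1 + m)) h
  simpa using this

lemma aux_sub_reg {k : Type*} [CommRing k] {σ : Type*} [DecidableEq σ] {a b : σ}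
    (hab : a ≠ b) {q : MvPolynomial σ k} (h : (X b - X a) * q = 0) : q = 0 := by
  set f : MvPolynomial σ k →ₐ[k] MvPolynomial σ k :=
    aeval (fun i => if i = b then X a + X b else X i) with hf
  set g : MvPolynomial σ k →ₐ[k] MvPolynomial σ k :=
    aeval (fun i => if i = b then X b - X a else X i) with hg
  have hgf : g.comp f = AlgHom.id k _ := by
    apply algHom_ext
    intro i
    rcases eq_or_ne i b with rfl | hib
    · simp only [AlgHom.comp_apply, AlgHom.id_apply, hf, hg, aeval_X, if_pos rfl, map_add]
      simp [hab, hab.symm]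
    · simp [hf, hg, hib]
  have hfq : f ((X b - X a) * q) = X b * f q := by
    rw [map_mul, map_sub]
    simp [hf, hab]
  rw [h, map_zero] at hfq
  have : f q = 0 := aux_X_reg b hfq.symm
  have := congrArg g this
  rw [map_zero] at this
  have h2 : g (f q) = q := by rw [← AlgHom.comp_apply, hgf]; rfl
  rw [h2] at this
  exact this

/-- In the degenerate affine Hecke algebra `H_n` over a commutative ring `k`
(abstracted here: a `k`-algebra `A` with elements `x 1, …, x n` and
`s 1, …, s (n-1)` satisfying `s_j² = 1`, pairwise commuting `x_i`,
`x_{j+1} s_j = s_j x_j + 1`, and `x_i s_j = s_j x_i` for `i ∉ {j, j+1}`;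
evaluation of polynomials at `x_1, …, x_n` is encoded by a ring homomorphism
`φ : k[X_1,…,X_n] →+* A` with `φ(X_i) = x_i` and `φ(C a) = a·1`), every symmetric
polynomial `p` in `x_1, …, x_n` is central: `φ p` commutes with every
`s_j` (`1 ≤ j ≤ n-1`), and with every `x_i`, hence with all of `H_n`. -/
theorem symmetric_polynomials_central_in_dAHA
    (k A : Type*) [CommRing k] [Ring A] [Algebra k A]
    (n : ℕ) (x s : ℕ → A)
    (hss : ∀ j, 1 ≤ j → j < n → s j * s j = 1)
    (hxx : ∀ i j, Commute (x i) (x j))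
    (hcross : ∀ j, 1 ≤ j → j < n → x (j + 1) * s j = s j * x j + 1)
    (hfar : ∀ i j, 1 ≤ j → j < n → i ≠ j → i ≠ j + 1 → x i * s j = s j * x i)
    (φ : MvPolynomial (Fin n) k →+* A)
    (hφX : ∀ i : Fin n, φ (MvPolynomial.X i) = x ((i : ℕ) + 1))
    (hφC : ∀ a : k, φ (MvPolynomial.C a) = algebraMap k A a)
    (p : MvPolynomial (Fin n) k) (hp : p.IsSymmetric) :
    (∀ j, 1 ≤ j → j < n → Commute (φ p) (s j)) ∧ (∀ i, Commute (φ p) (x i)) := by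
  constructor
  · intro j hj1 hj2
    have ha' : j - 1 < n := by omega
    set a : Fin n := ⟨j - 1, ha'⟩ with hadef
    set b : Fin n := ⟨j, hj2⟩ with hbdef
    have hab : a ≠ b := by
      simp only [hadef, hbdef, Fin.ext_iff, Ne]
      omega
    have hxa : φ (X a) = x j := by rw [hφX]; congr 1; simp [hadef]; omega
    have hxb : φ (X b) = x (j + 1) := by rw [hφX]
    have hs2 := hss j hj1 hj2
    have hxbs : x (j + 1) * s j = s j * x j + 1 := hcross j hj1 hj2
    have hxas : x j * s j = s j * x (j + 1) - 1 := by
      have h1 : s j * (x (j + 1) * s j) * s j = s j * (s j * x j + 1) * s j := by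
        rw [hxbs]
      have h2 : s j * x (j + 1) = x j * s j + 1 := by
        calc s j * x (j + 1) = s j * x (j + 1) * (s j * s j) := by rw [hs2, mul_one]
          _ = s j * (x (j + 1) * s j) * s j := by noncomm_ring
          _ = s j * (s j * x j + 1) * s j := h1
          _ = (s j * s j) * (x j * s j) + (s j * s j) := by noncomm_ring
          _ = x j * s j + 1 := by rw [hs2, one_mul]
      rw [h2]; noncomm_ring
    set τ : MvPolynomial (Fin n) k →ₐ[k] MvPolynomial (Fin n) k :=
      rename (Equiv.swap a b) with hτ
    have key : ∀ q : MvPolynomial (Fin n) k, ∃ r,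
        φ q * s j = s j * φ (τ q) + φ r ∧ (X b - X a) * r = q - τ q := by
      have base : ∀ i : Fin n, ∃ r,
          φ (X i) * s j = s j * φ (τ (X i)) + φ r ∧ (X b - X a) * r = X i - τ (X i) := by
        intro i
        rcases eq_or_ne i a with rfl | hia
        · refine ⟨-1, ?_, ?_⟩
          · rw [hτ, rename_X, Equiv.swap_apply_left, hxa, hxb, map_neg, map_one, hxas]
            noncomm_ring
          · rw [hτ, rename_X, Equiv.swap_apply_left]; ring
        rcases eq_or_ne i b with rfl | hib
        · refine ⟨1, ?_, ?_⟩
          · rw [hτ, rename_X, Equiv.swap_apply_right, hxa, hxb, map_one, hxbs]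
          · rw [hτ, rename_X, Equiv.swap_apply_right]; ring
        · refine ⟨0, ?_, ?_⟩
          · have hfix : Equiv.swap a b i = i := Equiv.swap_apply_of_ne_of_ne hia hib
            rw [hτ, rename_X, hfix, map_zero, add_zero, hφX]
            refine hfar _ _ hj1 hj2 ?_ ?_
            · intro hc
              apply hia
              simp only [hadef, Fin.ext_iff]
              omega
            · intro hc
              apply hib
              simp only [hbdef, Fin.ext_iff]
              omega
          · rw [hτ, rename_X, Equiv.swap_apply_of_ne_of_ne hia hib]; ring
      intro q
      induction q using MvPolynomial.induction_on with
      | C c =>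
        refine ⟨0, ?_, ?_⟩
        · rw [hτ, rename_C, hφC, map_zero, add_zero, Algebra.commutes]
        · rw [hτ, rename_C]; ring
      | add q q' hq hq' =>
        obtain ⟨r, e, d⟩ := hq
        obtain ⟨r', e', d'⟩ := hq'
        refine ⟨r + r', ?_, ?_⟩
        · rw [map_add, map_add, add_mul, e, e', map_add, map_add]
          noncomm_ring
        · rw [map_add, mul_add, d, d']; ring
      | mul_X q i hq =>
        obtain ⟨r, e, d⟩ := hq
        obtain ⟨r', e', d'⟩ := base i
        refine ⟨r * τ (X i) + q * r', ?_, ?_⟩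
        · rw [map_mul, map_mul, map_mul, map_add, map_mul, map_mul, mul_assoc, e',
            mul_add, ← mul_assoc, e]
          noncomm_ring
        · rw [mul_add, ← mul_assoc, d, map_mul]
          have : (X b - X a) * (q * r') = q * ((X b - X a) * r') := by ring
          rw [this, d']
          ring
    obtain ⟨r, e, d⟩ := key p
    have hτp : τ p = p := hp (Equiv.swap a b)
    rw [hτp] at e d
    rw [sub_self] at d
    have hr : r = 0 := aux_sub_reg hab d
    rw [hr, map_zero, add_zero] at e
    exact e
  · intro i
    clear hp
    induction p using MvPolynomial.induction_on with
    | C c =>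
      rw [hφC]
      exact Algebra.commutes c (x i)
    | add q q' hq hq' =>
      rw [map_add]
      exact hq.add_left hq'
    | mul_X q m hq =>
      rw [map_mul]
      exact hq.mul_left (by rw [hφX]; exact hxx _ _)
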